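/- Let H be a complex Hilbert space and let A, B ∈ B₊(H). If A ≪ B, then the closure of the range of A is contained in the closure of the range of B. -/

import Mathlib

open ContinuousLinearMap Filter Topology

variable {H : Type} [NormedAddCommGroup H] [InnerProductSpace ℂ H] [CompleteSpace H]

/-- The Loewner order on bounded operators: `A ≤ B` iff `B - A` is positive. -/
def Loewner (A B : H →L[ℂ] H) : Prop := (B - A).IsPositive

/-- `A` is `B`-absolutely continuous: `A` is the strong-operator-topology limit of a
monotone increasing sequence of positive operators, each dominated by a nonnegative
multiple of `B`. -/
def AbsCont (A B : H →L[ℂ] H) : Prop :=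
  ∃ f : ℕ → H →L[ℂ] H,
    (∀ n, (f n).IsPositive) ∧
    (∀ m n, m ≤ n → Loewner (f m) (f n)) ∧
    (∀ n, ∃ c : ℝ, 0 ≤ c ∧ Loewner (f n) (c • B)) ∧
    (∀ x : H, Tendsto (fun n => f n x) atTop (𝓝 (A x)))

/-- `A` and `B` are singular: the only positive operator below both (in the Loewner
order) is `0`. -/
def Singular (A B : H →L[ℂ] H) : Prop :=
  ∀ C : H →L[ℂ] H, C.IsPositive → Loewner C A → Loewner C B → C = 0

/-- An operator range: a subspace which is the range of some bounded operator. -/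
def IsOpRange (M : Submodule ℂ H) : Prop := ∃ S : H →L[ℂ] H, LinearMap.range (S : H →L[ℂ] H).toLinearMap = M

/-!
For a self-adjoint operator `T` the closure of the range is `(ker T)ᗮ`, so it suffices to show
`ker B ≤ ker A`. If `0 ≤ S ≤ c B` and `B x = 0`, then `⟪S x, x⟫ = 0`, which for a positive
`S = R* R` means `R x = 0`, so `S x = 0`. Thus `ker B` is killed by every approximant of `A`, and
therefore by their strong limit `A`.
-/

lemma LinearMap.ker_le_ker_of_tendsto {ι R M N P : Type*} [Semiring R] [AddCommMonoid M]
    [AddCommMonoid N] [AddCommMonoid P] [Module R M] [Module R N] [Module R P]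
    [TopologicalSpace N] [T2Space N] {l : Filter ι} [l.NeBot]
    {f : ι → M →ₗ[R] N} {A : M →ₗ[R] N} {B : M →ₗ[R] P}
    (hf : ∀ i, B.ker ≤ (f i).ker) (hA : ∀ x, Tendsto (fun i => f i x) l (𝓝 (A x))) :
    B.ker ≤ A.ker := fun x hx =>
  tendsto_nhds_unique (hA x) <| by
    simp only [LinearMap.mem_ker.mp (hf _ hx), tendsto_const_nhds]

lemma IsSelfAdjoint.closure_range_eq_orthogonal_ker {𝕜 E : Type*} [RCLike 𝕜]
    [NormedAddCommGroup E] [InnerProductSpace 𝕜 E] [CompleteSpace E] {T : E →L[𝕜] E}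
    (hT : IsSelfAdjoint T) :
    closure (Set.range T) = ((T : E →ₗ[𝕜] E).kerᗮ : Set E) := by
  rw [← hT.isStarNormal.orthogonal_range, Submodule.orthogonal_orthogonal_eq_closure,
    Submodule.topologicalClosure_coe, LinearMap.coe_range, coe_coe]

open scoped InnerProductSpace

lemma ContinuousLinearMap.IsPositive.apply_eq_zero_of_re_inner_self_eq_zero {T : H →L[ℂ] H}
    (hT : T.IsPositive) {x : H} (hx : (⟪T x, x⟫_ℂ).re = 0) : T x = 0 := by
  obtain ⟨R, rfl⟩ :=
    CStarAlgebra.nonneg_iff_eq_star_mul_self.mp ((nonneg_iff_isPositive T).mpr hT)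
  have hRx : R x = 0 := by
    rw [star_eq_adjoint, mul_apply_eq_comp, adjoint_inner_left, ← RCLike.re_to_complex,
      inner_self_eq_norm_sq] at hx
    simpa using hx
  simp [hRx]

lemma ContinuousLinearMap.ker_le_ker_of_le_smul {S B : H →L[ℂ] H} (hS : S.IsPositive) {c : ℝ}
    (hSB : S ≤ c • B) : (B : H →ₗ[ℂ] H).ker ≤ (S : H →ₗ[ℂ] H).ker := by
  intro x hx
  have hBx : B x = 0 := hx
  have hle : (⟪S x, x⟫_ℂ).re ≤ 0 := by
    simpa [hBx] using hSB.re_inner_nonneg_left x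
  exact hS.apply_eq_zero_of_re_inner_self_eq_zero (hle.antisymm (hS.re_inner_nonneg_left x))

lemma AbsCont.ker_le_ker {A B : H →L[ℂ] H} (h : AbsCont A B) :
    (B : H →ₗ[ℂ] H).ker ≤ (A : H →ₗ[ℂ] H).ker := by
  obtain ⟨f, hf_pos, -, hf_le, hf_lim⟩ := h
  refine LinearMap.ker_le_ker_of_tendsto (f := fun n => (f n : H →ₗ[ℂ] H)) (fun n => ?_)
    hf_lim
  obtain ⟨c, -, hc⟩ := hf_le n
  exact ker_le_ker_of_le_smul (hf_pos n) hc

/-- If `A ≪ B` for positive operators, then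
`closure (ran A) ⊆ closure (ran B)`. -/
theorem stmt7 (A B : H →L[ℂ] H) (hA : A.IsPositive) (hB : B.IsPositive)
    (h : AbsCont A B) :
    closure (Set.range ⇑A) ⊆ closure (Set.range ⇑B) := by
  rw [hA.isSelfAdjoint.closure_range_eq_orthogonal_ker,
    hB.isSelfAdjoint.closure_range_eq_orthogonal_ker]
  exact Submodule.orthogonal_le h.ker_le_ker
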